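/- arXiv:1501.05672 — 5 statements merged into one kernel-verified Lean document; each statement's English description precedes it below -/
import Mathlib

section
/- Suppose in addition that there exist 0 < r₀ < 1 < R and a function f analytic on the annulus {ζ ∈ ℂ : r₀ < |ζ| < R} such that w′(θ) = f(e^{iθ}) for all θ ∈ (0,2π). Then there exist r ∈ (0,1) and functions G̃, D̃, J̃ analytic on {z ∈ ℂ : |z| > r} such that G̃(z) = G_n(z), D̃(z) = D_n(z), and J̃(z) = J_n(z) for all z with |z| > 1. -/
/-!
Each of `G_n`, `D_n`, `J_n` is a constant times `∫₀^{2π} A(e^{iθ}) / (z - e^{iθ}) dθ` with `A`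
holomorphic on the annulus `r₀ < |ζ| < R`: on the unit circle `e^{-iθ} = 1/e^{iθ}` and
`|p(e^{iθ})|² = p(ζ)·p̄(1/ζ)` at `ζ = e^{iθ}`, so the integrands are restrictions of holomorphic
functions. Such an integral is `(1/i)∮_{|ζ|=1} A(ζ) dζ / (ζ(z - ζ))`, and for `|z| > 1` Cauchy's
theorem on the annulus `ρ ≤ |ζ| ≤ 1` shrinks the contour to `|ζ| = ρ` for any `ρ ∈ (r₀, 1)`.
The integral over `|ζ| = ρ` is holomorphic in `z` on `|z| > ρ`.
-/

open Complex Polynomial MeasureTheory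

/-- The reversed polynomial `p*(z) = z^{deg p}·conj(p(1/conj z))`. -/
noncomputable def revPoly (p : Polynomial ℂ) : Polynomial ℂ :=
  (p.map (starRingEnd ℂ)).reverse

open Metric Set
open scoped Real

noncomputable def circleCauchyTransform (A : ℂ → ℂ) (ρ : ℝ) (z : ℂ) : ℂ :=
  ∫ θ in (0:ℝ)..2 * π, A (circleMap 0 ρ θ) / (z - circleMap 0 ρ θ)

section CauchyTransform

variable {A : ℂ → ℂ} {ρ : ℝ}

theorem le_norm_sub_circleMap {z₀ x : ℂ} (hx : x ∈ ball z₀ ((‖z₀‖ - |ρ|) / 2)) (θ : ℝ) :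
    (‖z₀‖ - |ρ|) / 2 ≤ ‖x - circleMap 0 ρ θ‖ := by
  rw [mem_ball, dist_eq_norm] at hx
  have h₁ := norm_sub_norm_le x (circleMap 0 ρ θ)
  have h₂ := norm_sub_norm_le z₀ x
  rw [norm_circleMap_zero] at h₁
  rw [norm_sub_rev] at h₂
  linarith

theorem hasDerivAt_circleCauchyTransform (hA : CircleIntegrable A 0 ρ) {z₀ : ℂ}
    (hz₀ : |ρ| < ‖z₀‖) :
    HasDerivAt (circleCauchyTransform A ρ)
      (∫ θ in (0:ℝ)..2 * π, -A (circleMap 0 ρ θ) / (z₀ - circleMap 0 ρ θ) ^ 2) z₀ := by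
  set ε := (‖z₀‖ - |ρ|) / 2
  have hε : 0 < ε := by simp only [ε]; linarith
  have hne : ∀ x ∈ ball z₀ ε, ∀ θ, x - circleMap 0 ρ θ ≠ 0 := fun x hx θ =>
    norm_pos_iff.1 (hε.trans_le (le_norm_sub_circleMap hx θ))
  have hAm : AEStronglyMeasurable (fun θ => A (circleMap 0 ρ θ))
      (volume.restrict (uIoc 0 (2 * π))) :=
    (intervalIntegrable_iff.1 hA).aestronglyMeasurable
  refine (intervalIntegral.hasDerivAt_integral_of_dominated_loc_of_deriv_le
    (F' := fun x θ => -A (circleMap 0 ρ θ) / (x - circleMap 0 ρ θ) ^ 2)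
    (bound := fun θ => ‖A (circleMap 0 ρ θ)‖ / ε ^ 2) (ball_mem_nhds z₀ hε)
    ?meas ?int ?meas' ?bound ?intBound ?deriv).2
  case meas =>
    exact .of_forall fun x => by
      simp only [div_eq_mul_inv]
      exact hAm.mul ((measurable_circleMap 0 ρ).const_sub x).inv.aestronglyMeasurable
  case int =>
    simp only [div_eq_mul_inv]
    exact IntervalIntegrable.mul_continuousOn hA
      ((continuous_const.sub (continuous_circleMap 0 ρ)).continuousOn.inv₀
        fun θ _ => hne z₀ (mem_ball_self hε) θ)
  case meas' =>
    simp only [div_eq_mul_inv]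
    exact hAm.neg.mul
      (((measurable_circleMap 0 ρ).const_sub z₀).pow_const 2).inv.aestronglyMeasurable
  case bound =>
    refine ae_of_all _ fun θ _ x hx => ?_
    rw [norm_div, norm_neg, norm_pow]
    gcongr
    exact le_norm_sub_circleMap hx θ
  case intBound =>
    exact hA.norm.div_const _
  case deriv =>
    refine ae_of_all _ fun θ _ x hx => ?_
    have : HasDerivAt (fun y => A (circleMap 0 ρ θ) / (y - circleMap 0 ρ θ))
        ((0 * (x - circleMap 0 ρ θ) - A (circleMap 0 ρ θ) * 1) / (x - circleMap 0 ρ θ) ^ 2) x :=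
      (hasDerivAt_const x _).div ((hasDerivAt_id' x).sub_const _) (hne x hx θ)
    simpa using this

theorem analyticOnNhd_circleCauchyTransform (hA : CircleIntegrable A 0 ρ) :
    AnalyticOnNhd ℂ (circleCauchyTransform A ρ) {z | |ρ| < ‖z‖} :=
  DifferentiableOn.analyticOnNhd
    (fun _ hz => (hasDerivAt_circleCauchyTransform hA hz).differentiableAt.differentiableWithinAt)
    (isOpen_lt continuous_const continuous_norm)

theorem circleIntegral_div_mul_sub (hρ : ρ ≠ 0) (z : ℂ) :
    (∮ ζ in C(0, ρ), A ζ / (ζ * (z - ζ))) = I * circleCauchyTransform A ρ z := by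
  rw [circleIntegral, circleCauchyTransform, ← intervalIntegral.integral_const_mul]
  refine intervalIntegral.integral_congr fun θ _ => ?_
  rw [deriv_circleMap, smul_eq_mul]
  field_simp [circleMap_ne_center hρ]

theorem circleCauchyTransform_eq_of_differentiableOn {r R : ℝ} (hr : 0 < r) (hrR : r ≤ R)
    (hA : DifferentiableOn ℂ A (closedBall 0 R \ ball 0 r)) {z : ℂ} (hz : R < ‖z‖) :
    circleCauchyTransform A R z = circleCauchyTransform A r z := by
  have hg : DifferentiableOn ℂ (fun ζ => A ζ / (ζ * (z - ζ))) (closedBall 0 R \ ball 0 r) := by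
    refine hA.div (by fun_prop) fun ζ hζ => mul_ne_zero ?_ (sub_ne_zero.2 ?_)
    · rintro rfl
      exact hζ.2 (mem_ball_self hr)
    · rintro rfl
      exact (mem_closedBall_zero_iff.1 hζ.1).not_gt hz
  have hopen : IsOpen (ball (0:ℂ) R \ closedBall 0 r) := isOpen_ball.sdiff isClosed_closedBall
  have := circleIntegral_eq_of_differentiable_on_annulus_off_countable hr hrR countable_empty
    hg.continuousOn fun ζ hζ => hg.differentiableAt <| Filter.mem_of_superset (hopen.mem_nhds hζ.1)
      (sdiff_subset_sdiff ball_subset_closedBall ball_subset_closedBall)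
  rw [circleIntegral_div_mul_sub hr.ne', circleIntegral_div_mul_sub (hr.trans_le hrR).ne'] at this
  exact mul_left_cancel₀ I_ne_zero this

theorem exists_analyticOnNhd_eq_circleCauchyTransform {r R : ℝ} (hr : 0 < r) (hrR : r ≤ R)
    (hA : DifferentiableOn ℂ A (closedBall 0 R \ ball 0 r)) :
    ∃ T : ℂ → ℂ, AnalyticOnNhd ℂ T {z | r < ‖z‖} ∧
      ∀ z, R < ‖z‖ → T z = circleCauchyTransform A R z := by
  have hsphere : sphere (0:ℂ) r ⊆ closedBall 0 R \ ball 0 r := fun ζ hζ => by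
    rw [mem_sphere_zero_iff_norm] at hζ
    simp [hζ, hrR]
  refine ⟨circleCauchyTransform A r, ?_, fun z hz =>
    (circleCauchyTransform_eq_of_differentiableOn hr hrR hA hz).symm⟩
  simpa only [abs_of_pos hr] using analyticOnNhd_circleCauchyTransform
    ((hA.continuousOn.mono hsphere).circleIntegrable hr.le)

theorem integral_div_sub_exp_eq_circleCauchyTransform {g : ℝ → ℂ}
    (hg : ∀ θ ∈ Ioo 0 (2 * π), g θ = A (exp (θ * I))) (z : ℂ) :
    ∫ θ in (0:ℝ)..2 * π, g θ / (z - exp (θ * I)) = circleCauchyTransform A 1 z := by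
  have hπ : (0:ℝ) ≤ 2 * π := by positivity
  rw [circleCauchyTransform, intervalIntegral.integral_of_le hπ, intervalIntegral.integral_of_le hπ,
    integral_Ioc_eq_integral_Ioo, integral_Ioc_eq_integral_Ioo]
  refine setIntegral_congr_fun measurableSet_Ioo fun θ hθ => ?_
  simp [circleMap, hg θ hθ]

end CauchyTransform

theorem Polynomial.eval_mul_eval_map_conj_inv (p : ℂ[X]) {ζ : ℂ} (hζ : ‖ζ‖ = 1) :
    p.eval ζ * (p.map (starRingEnd ℂ)).eval ζ⁻¹ = ((‖p.eval ζ‖ ^ 2 : ℝ) : ℂ) := by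
  rw [inv_eq_conj hζ, eval_map_apply, mul_conj', ofReal_pow]

theorem stmt_4_general
    (n : ℕ)
    (w : ℝ → ℝ)
    (φ : ℕ → Polynomial ℂ)
    (G D J : ℂ → ℂ)
    (hG : ∀ z : ℂ, 1 < ‖z‖ → G z =
      Complex.I * (2 * Real.pi : ℂ)⁻¹ * ∫ θ in (0:ℝ)..(2 * Real.pi),
        ((‖(revPoly (φ (n - 1))).eval (Complex.exp (θ * Complex.I))‖ ^ 2
            * deriv w θ : ℝ) : ℂ) / (z - Complex.exp (θ * Complex.I)))
    (hD : ∀ z : ℂ, 1 < ‖z‖ → D z =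
      -Complex.I * z * (2 * Real.pi : ℂ)⁻¹ * ∫ θ in (0:ℝ)..(2 * Real.pi),
        ((revPoly (φ (n - 1))).eval (Complex.exp (θ * Complex.I))) ^ 2
          * ((deriv w θ : ℝ) : ℂ) * Complex.exp (-(n : ℂ) * θ * Complex.I)
          / (z - Complex.exp (θ * Complex.I)))
    (hJ : ∀ z : ℂ, 1 < ‖z‖ → J z =
      Complex.I * (2 * Real.pi : ℂ)⁻¹ * ∫ θ in (0:ℝ)..(2 * Real.pi),
        ((φ (n - 1)).eval (Complex.exp (θ * Complex.I))) ^ 2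
          * ((deriv w θ : ℝ) : ℂ) * Complex.exp (-((n : ℂ) - 2) * θ * Complex.I)
          / (z - Complex.exp (θ * Complex.I)))
    -- `w′(θ) = f(e^{iθ})` with `f` analytic in a neighborhood of the unit circle
    (r₀ R : ℝ) (hr₀ : 0 < r₀) (hr₀1 : r₀ < 1) (hR : 1 < R)
    (f : ℂ → ℂ)
    (hf : AnalyticOnNhd ℂ f {ζ : ℂ | r₀ < ‖ζ‖ ∧ ‖ζ‖ < R})
    (hwf : ∀ θ ∈ Set.Ioo (0:ℝ) (2 * Real.pi),
      ((deriv w θ : ℝ) : ℂ) = f (Complex.exp (θ * Complex.I))) :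
    ∃ r : ℝ, 0 < r ∧ r < 1 ∧
      ∃ Gt Dt Jt : ℂ → ℂ,
        AnalyticOnNhd ℂ Gt {z : ℂ | r < ‖z‖} ∧
        AnalyticOnNhd ℂ Dt {z : ℂ | r < ‖z‖} ∧
        AnalyticOnNhd ℂ Jt {z : ℂ | r < ‖z‖} ∧
        ∀ z : ℂ, 1 < ‖z‖ → Gt z = G z ∧ Dt z = D z ∧ Jt z = J z := by
  obtain ⟨ρ, hr₀ρ, hρ1⟩ := exists_between hr₀1
  have hρ : 0 < ρ := hr₀.trans hr₀ρ
  have hK : closedBall (0:ℂ) 1 \ ball 0 ρ ⊆ {ζ | r₀ < ‖ζ‖ ∧ ‖ζ‖ < R} := fun ζ hζ => by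
    simp only [mem_sdiff, mem_closedBall_zero_iff, mem_ball_zero_iff, not_lt] at hζ
    exact ⟨hr₀ρ.trans_le hζ.2, hζ.1.trans_lt hR⟩
  have hfK := hf.differentiableOn.mono hK
  have hK0 : ∀ ζ ∈ closedBall (0:ℂ) 1 \ ball 0 ρ, ζ ≠ 0 := fun ζ hζ =>
    norm_pos_iff.1 (hr₀.trans (hK hζ).1)
  have hq := (revPoly (φ (n - 1))).differentiable
  have hp := (φ (n - 1)).differentiable
  obtain ⟨TG, hTG, hTG_eq⟩ := exists_analyticOnNhd_eq_circleCauchyTransform hρ hρ1.le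
    (A := fun ζ => (revPoly (φ (n - 1))).eval ζ
      * ((revPoly (φ (n - 1))).map (starRingEnd ℂ)).eval ζ⁻¹ * f ζ)
    (by fun_prop (disch := assumption))
  obtain ⟨TD, hTD, hTD_eq⟩ := exists_analyticOnNhd_eq_circleCauchyTransform hρ hρ1.le
    (A := fun ζ => (revPoly (φ (n - 1))).eval ζ ^ 2 * f ζ * ζ ^ (-(n : ℤ)))
    (by fun_prop (disch := exact Or.inl hK0))
  obtain ⟨TJ, hTJ, hTJ_eq⟩ := exists_analyticOnNhd_eq_circleCauchyTransform hρ hρ1.le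
    (A := fun ζ => (φ (n - 1)).eval ζ ^ 2 * f ζ * ζ ^ ((2 : ℤ) - n))
    (by fun_prop (disch := exact Or.inl hK0))
  refine ⟨ρ, hρ, hρ1, fun z => I * (2 * π : ℂ)⁻¹ * TG z, fun z => -I * z * (2 * π : ℂ)⁻¹ * TD z,
    fun z => I * (2 * π : ℂ)⁻¹ * TJ z, analyticOnNhd_const.mul hTG,
    ((analyticOnNhd_const.mul analyticOnNhd_id).mul analyticOnNhd_const).mul hTD,
    analyticOnNhd_const.mul hTJ, fun z hz => ⟨?_, ?_, ?_⟩⟩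
  · dsimp only
    rw [hG z hz, hTG_eq z hz, integral_div_sub_exp_eq_circleCauchyTransform fun θ hθ => ?_]
    rw [ofReal_mul, hwf θ hθ, eval_mul_eval_map_conj_inv _ (norm_exp_ofReal_mul_I θ)]
  · dsimp only
    rw [hD z hz, hTD_eq z hz, integral_div_sub_exp_eq_circleCauchyTransform fun θ hθ => ?_]
    rw [hwf θ hθ, ← exp_int_mul]
    push_cast
    ring_nf
  · dsimp only
    rw [hJ z hz, hTJ_eq z hz, integral_div_sub_exp_eq_circleCauchyTransform fun θ hθ => ?_]
    rw [hwf θ hθ, ← exp_int_mul]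
    push_cast
    ring_nf

/-- **Proposition (analytic continuation of `G_n`, `D_n`, `J_n`).**
If `w′(θ) = f(e^{iθ})` with `f` analytic in a neighborhood `{r₀ < |ζ| < R}` of the unit
circle, then `G_n`, `D_n`, `J_n` extend analytically from `{|z| > 1}` to `{|z| > r}` for
some `r < 1`. -/
theorem stmt_4
    (n : ℕ) (hn : 1 ≤ n)
    (w : ℝ → ℝ)
    (hwper : Function.Periodic w (2 * Real.pi))
    (hwpos : ∀ θ, 0 ≤ w θ)
    (hwcont : Continuous w)
    (hwdiff : ∀ θ ∈ Set.Ioo (0:ℝ) (2 * Real.pi), DifferentiableAt ℝ w θ)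
    (hwint : IntegrableOn (deriv w) (Set.Ioo (0:ℝ) (2 * Real.pi)))
    (hwprob : (2 * Real.pi)⁻¹ * (∫ θ in (0:ℝ)..(2 * Real.pi), w θ) = 1)
    (hsupp : {θ ∈ Set.Ico (0:ℝ) (2 * Real.pi) | 0 < w θ}.Infinite)
    (φ : ℕ → Polynomial ℂ) (κ : ℕ → ℝ)
    (hκ : ∀ k ≤ n, 0 < κ k)
    (hdeg : ∀ k ≤ n, (φ k).natDegree = k)
    (hlead : ∀ k ≤ n, (φ k).leadingCoeff = (κ k : ℂ))
    (horth : ∀ j ≤ n, ∀ k ≤ n,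
      (2 * Real.pi : ℂ)⁻¹ * ∫ θ in (0:ℝ)..(2 * Real.pi),
          (φ j).eval (Complex.exp (θ * Complex.I))
            * (starRingEnd ℂ) ((φ k).eval (Complex.exp (θ * Complex.I))) * (w θ : ℂ)
        = if j = k then 1 else 0)
    (G D J : ℂ → ℂ)
    (hG : ∀ z : ℂ, 1 < ‖z‖ → G z =
      Complex.I * (2 * Real.pi : ℂ)⁻¹ * ∫ θ in (0:ℝ)..(2 * Real.pi),
        ((‖(revPoly (φ (n - 1))).eval (Complex.exp (θ * Complex.I))‖ ^ 2
            * deriv w θ : ℝ) : ℂ) / (z - Complex.exp (θ * Complex.I)))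
    (hD : ∀ z : ℂ, 1 < ‖z‖ → D z =
      -Complex.I * z * (2 * Real.pi : ℂ)⁻¹ * ∫ θ in (0:ℝ)..(2 * Real.pi),
        ((revPoly (φ (n - 1))).eval (Complex.exp (θ * Complex.I))) ^ 2
          * ((deriv w θ : ℝ) : ℂ) * Complex.exp (-(n : ℂ) * θ * Complex.I)
          / (z - Complex.exp (θ * Complex.I)))
    (hJ : ∀ z : ℂ, 1 < ‖z‖ → J z =
      Complex.I * (2 * Real.pi : ℂ)⁻¹ * ∫ θ in (0:ℝ)..(2 * Real.pi),
        ((φ (n - 1)).eval (Complex.exp (θ * Complex.I))) ^ 2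
          * ((deriv w θ : ℝ) : ℂ) * Complex.exp (-((n : ℂ) - 2) * θ * Complex.I)
          / (z - Complex.exp (θ * Complex.I)))
    -- `w′(θ) = f(e^{iθ})` with `f` analytic in a neighborhood of the unit circle
    (r₀ R : ℝ) (hr₀ : 0 < r₀) (hr₀1 : r₀ < 1) (hR : 1 < R)
    (f : ℂ → ℂ)
    (hf : AnalyticOnNhd ℂ f {ζ : ℂ | r₀ < ‖ζ‖ ∧ ‖ζ‖ < R})
    (hwf : ∀ θ ∈ Set.Ioo (0:ℝ) (2 * Real.pi),
      ((deriv w θ : ℝ) : ℂ) = f (Complex.exp (θ * Complex.I))) :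
    ∃ r : ℝ, 0 < r ∧ r < 1 ∧
      ∃ Gt Dt Jt : ℂ → ℂ,
        AnalyticOnNhd ℂ Gt {z : ℂ | r < ‖z‖} ∧
        AnalyticOnNhd ℂ Dt {z : ℂ | r < ‖z‖} ∧
        AnalyticOnNhd ℂ Jt {z : ℂ | r < ‖z‖} ∧
        ∀ z : ℂ, 1 < ‖z‖ → Gt z = G z ∧ Dt z = D z ∧ Jt z = J z :=
  stmt_4_general n w φ G D J hG hD hJ r₀ R hr₀ hr₀1 hR f hf hwf
end

section
/- For every integer n ≥ 2 and every collection x₁, …, x_n of n distinct points on the unit circle {z ∈ ℂ : |z| = 1}, there exist an integer m ≥ 1, points a₁, …, a_m ∈ ℂ \ {x₁,…,x_n}, and real numbers q₁, …, q_m such that for every j ∈ {1,…,n}: Σ_{k≠j} 1/(x_j − x_k) + Σ_{i=1}^{m} q_i/(x_j − a_i) = 0. -/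
/-!
Put a charge `-1/2` at each critical point of `P = ∏ₖ (X - xₖ)`, i.e. at each root of `P'`.
Writing `P = (X - xⱼ) L` one gets `P'(xⱼ) = L(xⱼ) ≠ 0` and `P''(xⱼ) = 2 L'(xⱼ)`, so the
logarithmic derivatives give `∑ᵢ 1 / (xⱼ - aᵢ) = P''(xⱼ) / P'(xⱼ) = 2 L'(xⱼ) / L(xⱼ)
= 2 ∑_{k ≠ j} 1 / (xⱼ - xₖ)`. The critical points avoid the `xⱼ` since these are simple
roots of `P`.
-/

open Polynomial

namespace Polynomial

section CommRing

variable {R : Type*} [CommRing R]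

theorem eval_derivative_X_sub_C_mul (z : R) (L : R[X]) :
    eval z (derivative ((X - C z) * L)) = eval z L := by
  simp

theorem eval_derivative_derivative_X_sub_C_mul (z : R) (L : R[X]) :
    eval z (derivative (derivative ((X - C z) * L))) = 2 * eval z (derivative L) := by
  simp only [derivative_mul, derivative_X_sub_C, derivative_one, derivative_add, eval_add,
    eval_mul, eval_sub, eval_X, eval_C, eval_zero, eval_one, sub_self]
  ring

end CommRing

section Field

variable {K : Type*} [Field K]

theorem eval_multiset_prod_X_sub_C_mul_sum_inv_sub {ι : Type*} (s : Multiset ι) (f : ι → K)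
    {z : K} (hz : ∀ i ∈ s, f i ≠ z) :
    eval z (s.map fun i => X - C (f i)).prod * (s.map fun i => (z - f i)⁻¹).sum =
      eval z (derivative (s.map fun i => X - C (f i)).prod) := by
  induction s using Multiset.induction with
  | empty => simp
  | cons i s ih =>
    have hi : z - f i ≠ 0 := sub_ne_zero.2 (hz i (Multiset.mem_cons_self i s)).symm
    simp only [Multiset.map_cons, Multiset.prod_cons, Multiset.sum_cons, derivative_mul,
      derivative_X_sub_C, one_mul, eval_mul, eval_add, eval_sub, eval_X, eval_C]
    rw [← ih fun k hk => hz k (Multiset.mem_cons_of_mem hk)]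
    field_simp

theorem eval_mul_sum_roots_inv_sub {p : K[X]} (hroots : p.roots.card = p.natDegree) {z : K}
    (hz : ¬ p.IsRoot z) :
    eval z p * (p.roots.map fun r => (z - r)⁻¹).sum = eval z (derivative p) := by
  have hprod := eval_multiset_prod_X_sub_C_mul_sum_inv_sub p.roots id (z := z)
    fun r hr hrz => hz (hrz ▸ isRoot_of_mem_roots hr)
  simp only [id] at hprod
  have hp := C_leadingCoeff_mul_prod_multiset_X_sub_C hroots
  set R := p.roots
  rw [← hp]
  simp only [derivative_mul, derivative_C, zero_mul, zero_add, eval_mul, eval_C, mul_assoc,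
    hprod]

variable {ι : Type*} [DecidableEq ι] {s : Finset ι} {f : ι → K} {j : ι}

theorem eval_prod_erase_X_sub_C_ne_zero (hf : Set.InjOn f s) (hj : j ∈ s) :
    eval (f j) (∏ i ∈ s.erase j, (X - C (f i))) ≠ 0 := by
  simp only [eval_prod, eval_sub, eval_X, eval_C]
  refine Finset.prod_ne_zero_iff.2 fun i hi => sub_ne_zero.2 fun hij => ?_
  exact (Finset.ne_of_mem_erase hi) (hf (Finset.mem_of_mem_erase hi) hj hij.symm)

theorem eval_derivative_prod_X_sub_C_ne_zero (hf : Set.InjOn f s) (hj : j ∈ s) :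
    eval (f j) (derivative (∏ i ∈ s, (X - C (f i)))) ≠ 0 := by
  rw [← Finset.mul_prod_erase s _ hj, eval_derivative_X_sub_C_mul]
  exact eval_prod_erase_X_sub_C_ne_zero hf hj

theorem sum_roots_derivative_inv_sub_eq_two_mul [IsAlgClosed K] (hf : Set.InjOn f s)
    (hj : j ∈ s) :
    ((derivative (∏ i ∈ s, (X - C (f i)))).roots.map fun c => (f j - c)⁻¹).sum =
      2 * ∑ i ∈ s.erase j, (f j - f i)⁻¹ := by
  set L := ∏ i ∈ s.erase j, (X - C (f i))
  have hL := eval_prod_erase_X_sub_C_ne_zero hf hj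
  have hQ := eval_derivative_prod_X_sub_C_ne_zero hf hj
  have hcrit := eval_mul_sum_roots_inv_sub IsAlgClosed.card_roots_eq_natDegree hQ
  have hlog : eval (f j) L * ∑ i ∈ s.erase j, (f j - f i)⁻¹ = eval (f j) (derivative L) :=
    eval_multiset_prod_X_sub_C_mul_sum_inv_sub (s.erase j).val f
      fun i hi hij => (Finset.ne_of_mem_erase hi) (hf (Finset.mem_of_mem_erase hi) hj hij)
  rw [← Finset.mul_prod_erase s _ hj, eval_derivative_X_sub_C_mul,
    eval_derivative_derivative_X_sub_C_mul] at hcrit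
  rw [← Finset.mul_prod_erase s _ hj]
  refine mul_left_cancel₀ hL ?_
  rw [hcrit, ← hlog]
  ring

end Field

end Polynomial

theorem Multiset.exists_fin_univ_map_eq {α : Type*} (s : Multiset α) :
    ∃ (m : ℕ) (a : Fin m → α), Finset.univ.val.map a = s :=
  ⟨_, s.toList.get, by rw [Fin.univ_val_map, List.ofFn_get, Multiset.coe_toList]⟩

theorem stmt_9_general (n : ℕ) (hn : 2 ≤ n) (x : Fin n → ℂ)
    (hinj : Function.Injective x) :
    ∃ (m : ℕ) (a : Fin m → ℂ) (q : Fin m → ℝ),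
      1 ≤ m ∧ (∀ i, a i ∉ Set.range x) ∧
      ∀ j : Fin n,
        (∑ k ∈ Finset.univ.erase j, 1 / (x j - x k))
          + ∑ i, (q i : ℂ) / (x j - a i) = 0 := by
  classical
  set Q := derivative (∏ k, (X - C (x k)))
  obtain ⟨m, a, ha⟩ := Q.roots.exists_fin_univ_map_eq
  have hm : m = n - 1 := by
    rw [← Finset.card_fin m, Finset.card_def, ← Multiset.card_map a, ha,
      IsAlgClosed.card_roots_eq_natDegree, natDegree_derivative,
      natDegree_finsetProd_X_sub_C_eq_card, Finset.card_fin]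
  refine ⟨m, a, fun _ => -(1 / 2), by omega, ?_, fun j => ?_⟩
  · rintro i ⟨j, hj⟩
    have hroot : Q.IsRoot (a i) := isRoot_of_mem_roots (ha ▸ Multiset.mem_map_of_mem a (by simp))
    exact eval_derivative_prod_X_sub_C_ne_zero hinj.injOn (Finset.mem_univ j) (hj ▸ hroot)
  · have hcrit := sum_roots_derivative_inv_sub_eq_two_mul hinj.injOn (Finset.mem_univ j)
    rw [← ha, Multiset.map_map, ← Finset.sum_eq_multiset_sum] at hcrit
    simp only [Function.comp_apply] at hcrit
    simp only [div_eq_mul_inv, ← Finset.mul_sum]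
    rw [hcrit]
    push_cast
    ring

/-- For every collection of `n ≥ 2` distinct points on the unit circle there exists a set
of electric field generators (points `aᵢ` with real charges `qᵢ`) putting the collection
in total electrostatic equilibrium. -/
theorem stmt_9 (n : ℕ) (hn : 2 ≤ n) (x : Fin n → ℂ)
    (hx : ∀ j, ‖x j‖ = 1) (hinj : Function.Injective x) :
    ∃ (m : ℕ) (a : Fin m → ℂ) (q : Fin m → ℝ),
      1 ≤ m ∧ (∀ i, a i ∉ Set.range x) ∧
      ∀ j : Fin n,
        (∑ k ∈ Finset.univ.erase j, 1 / (x j - x k))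
          + ∑ i, (q i : ℂ) / (x j - a i) = 0 :=
  stmt_9_general n hn x hinj
end

section
/- Let w₁, …, w_m ∈ ℂ be distinct, let t₁, …, t_m ∈ ℂ, and let S be a polynomial which is either zero or has degree at most m−2. Suppose P is a polynomial of degree N ≥ 1 whose zeros p₁, …, p_N are distinct, that P(w_i) ≠ 0 for every i ∈ {1,…,m}, and that P″(z) + (Σ_{i=1}^{m} t_i/(z − w_i))·P′(z) + (S(z)/∏_{j=1}^{m}(z − w_j))·P(z) = 0 for all z ∈ ℂ \ {w₁,…,w_m}. Then for every j ∈ {1,…,N}: Σ_{k≠j} 1/(p_j − p_k) + Σ_{i=1}^{m} (t_i/2)/(p_j − w_i) = 0. -/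
/-!
At a zero `a` of `P = (X - a) * Q` one has `P'(a) = Q(a)` and `P''(a) = 2 Q'(a)`. For
`P = c ∏ (X - p_k)` with distinct zeros and `a = p_j`, the logarithmic derivative `Q'/Q` at `a`
is `∑_{k ≠ j} 1 / (a - p_k)`, so `P''(a) = 2 P'(a) ∑_{k ≠ j} 1 / (a - p_k)` with `P'(a) ≠ 0`.
Since `P(a) = 0` and `a` is not a pole, the Lamé equation at `a` reduces to
`P''(a) + (∑ t_i / (a - w_i)) P'(a) = 0`; dividing by `P'(a)` gives the equilibrium relation.
-/

open Complex Polynomial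

section

variable {R : Type*} [CommRing R]

theorem eval_derivative_X_sub_C_mul_self (a : R) (Q : R[X]) :
    (derivative ((X - C a) * Q)).eval a = Q.eval a := by
  simp [derivative_mul]

theorem eval_derivative_derivative_X_sub_C_mul_self (a : R) (Q : R[X]) :
    (derivative (derivative ((X - C a) * Q))).eval a = 2 * (derivative Q).eval a := by
  simp [derivative_mul]
  ring

end

theorem eval_derivative_prod_X_sub_C {K ι : Type*} [Field K] [DecidableEq ι] (s : Finset ι)
    (p : ι → K) {z : K} (hz : ∀ k ∈ s, z ≠ p k) :
    (derivative (∏ k ∈ s, (X - C (p k)))).eval z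
      = (∏ k ∈ s, (z - p k)) * ∑ k ∈ s, 1 / (z - p k) := by
  simp only [derivative_prod_finset, derivative_X_sub_C, mul_one, eval_finsetSum, eval_prod,
    eval_sub, eval_X, eval_C, Finset.mul_sum]
  refine Finset.sum_congr rfl fun k hk => ?_
  rw [← Finset.prod_erase_mul _ _ hk, mul_one_div,
    mul_div_cancel_right₀ _ (sub_ne_zero.2 (hz k hk))]

section SimpleRoot

variable {K ι : Type*} [Field K] [Fintype ι] [DecidableEq ι] (c : K) (p : ι → K) (j : ι)

theorem eval_derivative_C_mul_prod_X_sub_C_self :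
    (derivative (C c * ∏ k, (X - C (p k)))).eval (p j)
      = c * ∏ k ∈ Finset.univ.erase j, (p j - p k) := by
  rw [derivative_C_mul, eval_C_mul, ← Finset.mul_prod_erase _ _ (Finset.mem_univ j),
    eval_derivative_X_sub_C_mul_self, eval_prod]
  simp

theorem eval_derivative_derivative_C_mul_prod_X_sub_C_self (hp : Function.Injective p) :
    (derivative (derivative (C c * ∏ k, (X - C (p k))))).eval (p j)
      = 2 * (c * ∏ k ∈ Finset.univ.erase j, (p j - p k))
          * ∑ k ∈ Finset.univ.erase j, 1 / (p j - p k) := by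
  have hne : ∀ k ∈ Finset.univ.erase j, p j ≠ p k := fun k hk =>
    hp.ne (Finset.ne_of_mem_erase hk).symm
  rw [derivative_C_mul, derivative_C_mul, eval_C_mul,
    ← Finset.mul_prod_erase _ _ (Finset.mem_univ j), eval_derivative_derivative_X_sub_C_mul_self,
    eval_derivative_prod_X_sub_C _ _ hne]
  ring

end SimpleRoot

theorem stmt_10_general (m : ℕ) (w : Fin m → ℂ)
    (t : Fin m → ℂ) (S : Polynomial ℂ)
    (N : ℕ) (c : ℂ) (hc : c ≠ 0)
    (p : Fin N → ℂ) (hp : Function.Injective p)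
    (P : Polynomial ℂ) (hP : P = C c * ∏ k, (X - C (p k)))
    (hPw : ∀ i, P.eval (w i) ≠ 0)
    (hode : ∀ z : ℂ, z ∉ Set.range w →
      (derivative (derivative P)).eval z
        + (∑ i, t i / (z - w i)) * (derivative P).eval z
        + (S.eval z / ∏ j, (z - w j)) * P.eval z = 0) :
    ∀ j : Fin N,
      (∑ k ∈ Finset.univ.erase j, 1 / (p j - p k))
        + ∑ i, (t i / 2) / (p j - w i) = 0 := by
  intro j
  have hroot : P.eval (p j) = 0 := by
    rw [hP, eval_C_mul, eval_prod, Finset.prod_eq_zero (Finset.mem_univ j) (by simp), mul_zero]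
  have hpw : p j ∉ Set.range w := by
    rintro ⟨i, hi⟩
    exact hPw i (hi ▸ hroot)
  have hderiv_ne : c * ∏ k ∈ Finset.univ.erase j, (p j - p k) ≠ 0 :=
    mul_ne_zero hc <| Finset.prod_ne_zero_iff.2 fun k hk =>
      sub_ne_zero.2 (hp.ne (Finset.ne_of_mem_erase hk).symm)
  have hlame := hode (p j) hpw
  rw [hroot, mul_zero, add_zero, hP, eval_derivative_derivative_C_mul_prod_X_sub_C_self c p j hp,
    eval_derivative_C_mul_prod_X_sub_C_self] at hlame
  have hsum : 2 * ∑ k ∈ Finset.univ.erase j, 1 / (p j - p k) + ∑ i, t i / (p j - w i) = 0 :=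
    (mul_eq_zero.1 (by linear_combination hlame)).resolve_left hderiv_ne
  simp only [div_right_comm _ (2 : ℂ), ← Finset.sum_div]
  linear_combination hsum / 2

/-- If a polynomial `P` of degree `N ≥ 1` with distinct zeros `p₁,…,p_N`, none of which is
one of the distinct points `w₁,…,w_m`, solves the generalized Lamé equation
`P″ + (Σ tᵢ/(z−wᵢ))·P′ + (S/∏(z−wⱼ))·P = 0` (with `S` zero or of degree at most `m−2`)
away from the `wᵢ`, then its zeros are in total electrostatic equilibrium with respect to
charges `tᵢ/2` at the points `wᵢ`. -/
theorem stmt_10 (m : ℕ) (w : Fin m → ℂ) (hw : Function.Injective w)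
    (t : Fin m → ℂ) (S : Polynomial ℂ)
    (hS : S = 0 ∨ (S.natDegree : ℤ) ≤ (m : ℤ) - 2)
    (N : ℕ) (hN : 1 ≤ N) (c : ℂ) (hc : c ≠ 0)
    (p : Fin N → ℂ) (hp : Function.Injective p)
    (P : Polynomial ℂ) (hP : P = C c * ∏ k, (X - C (p k)))
    (hPw : ∀ i, P.eval (w i) ≠ 0)
    (hode : ∀ z : ℂ, z ∉ Set.range w →
      (derivative (derivative P)).eval z
        + (∑ i, t i / (z - w i)) * (derivative P).eval z
        + (S.eval z / ∏ j, (z - w j)) * P.eval z = 0) :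
    ∀ j : Fin N,
      (∑ k ∈ Finset.univ.erase j, 1 / (p j - p k))
        + ∑ i, (t i / 2) / (p j - w i) = 0 :=
  stmt_10_general m w t S N c hc p hp P hP hPw hode
end

section
/- For every integer n ≥ 2 and every z ∈ ℂ with |z| < 1: (i) (i/(2π))∫₀^{2π} |φ_{n−1}*(e^{iθ})|²·w′(θ)/(z − e^{iθ}) dθ = 1/(2 − z); (ii) (−iz/(2π))∫₀^{2π} φ_{n−1}*(e^{iθ})²·w′(θ)·e^{−inθ}/(z − e^{iθ}) dθ = 0; (iii) (i/(2π))∫₀^{2π} φ_{n−1}(e^{iθ})²·w′(θ)·e^{−i(n−2)θ}/(z − e^{iθ}) dθ = 2z^{n−2}(z² − 1)/(z − 2)². -/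
/-!
Write `u = e^{iθ}`. On the unit circle `w′(θ) = 6iu(u² − 1)/((2 − u)²(2u − 1)²)` and
`|2 − u|² = (2 − u)(2 − u⁻¹)`, so each integrand is `i u f(u)/(u − a)` for a function `f`
holomorphic on the closed unit disc, and the integral is `2πi f(a)` by Cauchy's formula.
In (iii) `a = z` directly. In (i) and (ii) the integrand has several poles inside the disc; the
substitution `θ ↦ 2π − θ`, i.e. `u ↦ u⁻¹`, leaves only `a = 1/2` in (i) and `a = 0` in (ii),
where `f` vanishes because `n ≥ 1`.
-/

open Complex Metric ComplexConjugate

lemma two_sub_ne_zero_of_norm_le_one {u : ℂ} (hu : ‖u‖ ≤ 1) : (2 : ℂ) - u ≠ 0 :=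
  sub_ne_zero.mpr (ne_of_apply_ne norm (by norm_num; linarith))

lemma two_mul_sub_one_ne_zero_of_norm_eq_one {u : ℂ} (hu : ‖u‖ = 1) : 2 * u - 1 ≠ 0 :=
  sub_ne_zero.mpr (ne_of_apply_ne norm (by norm_num [hu]))

lemma mul_sub_one_ne_zero_of_norm_lt_one {z u : ℂ} (hz : ‖z‖ < 1) (hu : ‖u‖ ≤ 1) :
    z * u - 1 ≠ 0 :=
  sub_ne_zero.mpr (ne_of_apply_ne norm (by
    rw [norm_mul, norm_one]
    nlinarith [norm_nonneg z, norm_nonneg u]))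

lemma exp_ofReal_two_pi_sub_mul_I (θ : ℝ) :
    exp (((2 * Real.pi - θ : ℝ) : ℂ) * I) = (exp (θ * I))⁻¹ := by
  rw [show ((2 * Real.pi - θ : ℝ) : ℂ) * I = -(θ * I) + 2 * Real.pi * I by push_cast; ring,
    exp_add, exp_two_pi_mul_I, mul_one, exp_neg]

lemma exp_neg_natCast_mul_mul_I (n : ℕ) (x : ℂ) :
    exp (-(n : ℂ) * x * I) = (exp (x * I) ^ n)⁻¹ := by
  rw [← exp_nat_mul, ← exp_neg]
  ring_nf

lemma ofReal_norm_sub_sq_of_norm_eq_one (c : ℂ) {u : ℂ} (hu : ‖u‖ = 1) :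
    ((‖c - u‖ ^ 2 : ℝ) : ℂ) = (c - u) * (conj c - u⁻¹) := by
  rw [ofReal_pow, ← mul_conj', map_sub, ← inv_eq_conj hu]

lemma ofReal_neg_twelve_mul_sin_div_sq (θ : ℝ) :
    ((-12 * Real.sin θ / (5 - 4 * Real.cos θ) ^ 2 : ℝ) : ℂ) =
      6 * I * exp (θ * I) * (exp (θ * I) ^ 2 - 1) /
        ((2 - exp (θ * I)) ^ 2 * (2 * exp (θ * I) - 1) ^ 2) := by
  push_cast
  simp only [Complex.sin, Complex.cos, neg_mul, exp_neg]
  rw [show (5 : ℂ) - 4 * ((exp (θ * I) + (exp (θ * I))⁻¹) / 2) =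
      (2 - exp (θ * I)) * (2 * exp (θ * I) - 1) / exp (θ * I) by field_simp; ring]
  field_simp
  ring

lemma integral_comp_two_pi_sub {E : Type*} [NormedAddCommGroup E] [NormedSpace ℝ E]
    (F : ℝ → E) :
    ∫ θ in (0 : ℝ)..2 * Real.pi, F (2 * Real.pi - θ) = ∫ θ in (0 : ℝ)..2 * Real.pi, F θ := by
  simp [intervalIntegral.integral_comp_sub_left]

lemma integral_exp_mul_I_div_sub {f : ℂ → ℂ} (hf : DifferentiableOn ℂ f (closedBall 0 1))
    {w : ℂ} (hw : ‖w‖ < 1) :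
    ∫ θ in (0 : ℝ)..2 * Real.pi, I * exp (θ * I) * f (exp (θ * I)) / (exp (θ * I) - w) =
      2 * Real.pi * I * f w := by
  have h := hf.circleIntegral_sub_inv_smul (mem_ball_zero_iff.mpr hw)
  simp only [circleIntegral, deriv_circleMap, circleMap, ofReal_one, one_mul, zero_add,
    smul_eq_mul] at h
  rw [← h]
  congr 1 with θ
  ring

theorem bernsteinSzego_G_eq {z : ℂ} (hz : ‖z‖ < 1) :
    Complex.I * (2 * Real.pi : ℂ)⁻¹ * ∫ θ in (0:ℝ)..(2 * Real.pi),
        (((‖(2 - Complex.exp (θ * Complex.I)) / (Real.sqrt 3 : ℂ)‖) ^ 2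
            * (-12 * Real.sin θ / (5 - 4 * Real.cos θ) ^ 2) : ℝ) : ℂ)
          / (z - Complex.exp (θ * Complex.I))
      = 1 / (2 - z) := by
  set f : ℂ → ℂ := fun u => (1 - u ^ 2) / ((2 - u) * (z * u - 1))
  have hf : DifferentiableOn ℂ f (closedBall 0 1) :=
    DifferentiableOn.div (by fun_prop) (by fun_prop) fun u hu =>
      have hu : ‖u‖ ≤ 1 := mem_closedBall_zero_iff.mp hu
      mul_ne_zero (two_sub_ne_zero_of_norm_le_one hu) (mul_sub_one_ne_zero_of_norm_lt_one hz hu)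
  rw [← integral_comp_two_pi_sub, intervalIntegral.integral_congr
    (g := fun θ : ℝ => I * exp (θ * I) * f (exp (θ * I)) / (exp (θ * I) - 1 / 2)),
    integral_exp_mul_I_div_sub hf (by norm_num)]
  · have h2z := two_sub_ne_zero_of_norm_le_one hz.le
    have hz2 : z - 2 ≠ 0 := fun h => h2z (by linear_combination -h)
    simp only [f]
    field_simp
    rw [I_sq]
    ring
  intro θ _
  simp only [f]
  rw [ofReal_mul, norm_div, div_pow, ofReal_div, ofReal_neg_twelve_mul_sin_div_sq,
    ofReal_norm_sub_sq_of_norm_eq_one _ (norm_exp_ofReal_mul_I _), map_ofNat,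
    exp_ofReal_two_pi_sub_mul_I]
  have hsqrt : ((‖(√3 : ℂ)‖ ^ 2 : ℝ) : ℂ) = 3 := by simp
  rw [hsqrt]
  field_simp
  ring

theorem bernsteinSzego_D_eq_zero {n : ℕ} (hn : n ≠ 0) {z : ℂ} (hz : ‖z‖ < 1) :
    -Complex.I * z * (2 * Real.pi : ℂ)⁻¹ * ∫ θ in (0:ℝ)..(2 * Real.pi),
        ((2 - Complex.exp (θ * Complex.I)) / (Real.sqrt 3 : ℂ)) ^ 2
          * ((-12 * Real.sin θ / (5 - 4 * Real.cos θ) ^ 2 : ℝ) : ℂ)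
          * Complex.exp (-(n : ℂ) * θ * Complex.I) / (z - Complex.exp (θ * Complex.I))
      = 0 := by
  set f : ℂ → ℂ := fun u => 2 * u ^ n * (1 - u ^ 2) / ((2 - u) ^ 2 * (z * u - 1))
  have hf : DifferentiableOn ℂ f (closedBall 0 1) :=
    DifferentiableOn.div (by fun_prop) (by fun_prop) fun u hu =>
      have hu : ‖u‖ ≤ 1 := mem_closedBall_zero_iff.mp hu
      mul_ne_zero (pow_ne_zero 2 (two_sub_ne_zero_of_norm_le_one hu))
        (mul_sub_one_ne_zero_of_norm_lt_one hz hu)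
  rw [← integral_comp_two_pi_sub, intervalIntegral.integral_congr
    (g := fun θ : ℝ => I * exp (θ * I) * f (exp (θ * I)) / (exp (θ * I) - 0)),
    integral_exp_mul_I_div_sub hf (by norm_num)]
  · simp [f, hn]
  intro θ _
  have h2u := two_mul_sub_one_ne_zero_of_norm_eq_one (norm_exp_ofReal_mul_I θ)
  have hsqrt : (√3 : ℂ) ^ 2 = 3 := by norm_cast; simp
  simp only [f]
  rw [ofReal_neg_twelve_mul_sin_div_sq, exp_neg_natCast_mul_mul_I, exp_ofReal_two_pi_sub_mul_I]
  simp only [inv_pow, inv_inv]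
  field_simp
  rw [hsqrt]
  ring

theorem bernsteinSzego_J_eq {n : ℕ} (hn : 2 ≤ n) {z : ℂ} (hz : ‖z‖ < 1) :
    Complex.I * (2 * Real.pi : ℂ)⁻¹ * ∫ θ in (0:ℝ)..(2 * Real.pi),
        ((2 * Complex.exp (θ * Complex.I) ^ (n - 1) - Complex.exp (θ * Complex.I) ^ (n - 2))
            / (Real.sqrt 3 : ℂ)) ^ 2
          * ((-12 * Real.sin θ / (5 - 4 * Real.cos θ) ^ 2 : ℝ) : ℂ)
          * Complex.exp (-((n : ℂ) - 2) * θ * Complex.I) / (z - Complex.exp (θ * Complex.I))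
      = 2 * z ^ (n - 2) * (z ^ 2 - 1) / (z - 2) ^ 2 := by
  obtain ⟨m, rfl⟩ : ∃ m, n = m + 2 := ⟨n - 2, by omega⟩
  set f : ℂ → ℂ := fun u => 2 * u ^ m * (1 - u ^ 2) / (2 - u) ^ 2
  have hf : DifferentiableOn ℂ f (closedBall 0 1) :=
    DifferentiableOn.div (by fun_prop) (by fun_prop) fun u hu =>
      pow_ne_zero 2 (two_sub_ne_zero_of_norm_le_one (mem_closedBall_zero_iff.mp hu))
  rw [intervalIntegral.integral_congr
    (g := fun θ : ℝ => I * exp (θ * I) * f (exp (θ * I)) / (exp (θ * I) - z)),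
    integral_exp_mul_I_div_sub hf hz]
  · have h2z := two_sub_ne_zero_of_norm_le_one hz.le
    have hz2 : z - 2 ≠ 0 := fun h => h2z (by linear_combination -h)
    simp only [f, Nat.add_sub_cancel]
    field_simp
    rw [I_sq]
    ring
  intro θ _
  have hu : ‖exp (θ * I)‖ = 1 := norm_exp_ofReal_mul_I θ
  have h2u := two_mul_sub_one_ne_zero_of_norm_eq_one hu
  have huz : exp (θ * I) - z ≠ 0 := sub_ne_zero.mpr (ne_of_apply_ne norm (by rw [hu]; exact hz.ne'))
  have hzu : z - exp (θ * I) ≠ 0 := fun h => huz (by linear_combination -h)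
  have hsqrt : (√3 : ℂ) ^ 2 = 3 := by norm_cast; simp
  simp only [f, show m + 2 - 1 = m + 1 from rfl, Nat.add_sub_cancel]
  rw [show ((m + 2 : ℕ) : ℂ) - 2 = m by push_cast; ring, ofReal_neg_twelve_mul_sin_div_sq,
    exp_neg_natCast_mul_mul_I]
  field_simp
  rw [hsqrt]
  ring

/-- Explicit evaluation of the integrals `G_n(z)`, `D_n(z)`, `J_n(z)` for `|z| < 1` for the
degree one Bernstein–Szegő weight `w(θ) = 3/(5 − 4cos θ)` (parameter `ζ = 1/2`), with
`w′(θ) = −12 sin θ/(5 − 4cos θ)²`, `φ_{n−1}(ζ) = (2ζ^{n−1} − ζ^{n−2})/√3` and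
`φ_{n−1}*(ζ) = (2 − ζ)/√3`. -/
theorem stmt_15 (n : ℕ) (hn : 2 ≤ n) (z : ℂ) (hz : ‖z‖ < 1) :
    (Complex.I * (2 * Real.pi : ℂ)⁻¹ * ∫ θ in (0:ℝ)..(2 * Real.pi),
        (((‖(2 - Complex.exp (θ * Complex.I)) / (Real.sqrt 3 : ℂ)‖) ^ 2
            * (-12 * Real.sin θ / (5 - 4 * Real.cos θ) ^ 2) : ℝ) : ℂ)
          / (z - Complex.exp (θ * Complex.I))
      = 1 / (2 - z)) ∧
    (-Complex.I * z * (2 * Real.pi : ℂ)⁻¹ * ∫ θ in (0:ℝ)..(2 * Real.pi),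
        ((2 - Complex.exp (θ * Complex.I)) / (Real.sqrt 3 : ℂ)) ^ 2
          * ((-12 * Real.sin θ / (5 - 4 * Real.cos θ) ^ 2 : ℝ) : ℂ)
          * Complex.exp (-(n : ℂ) * θ * Complex.I) / (z - Complex.exp (θ * Complex.I))
      = 0) ∧
    (Complex.I * (2 * Real.pi : ℂ)⁻¹ * ∫ θ in (0:ℝ)..(2 * Real.pi),
        ((2 * Complex.exp (θ * Complex.I) ^ (n - 1) - Complex.exp (θ * Complex.I) ^ (n - 2))
            / (Real.sqrt 3 : ℂ)) ^ 2
          * ((-12 * Real.sin θ / (5 - 4 * Real.cos θ) ^ 2 : ℝ) : ℂ)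
          * Complex.exp (-((n : ℂ) - 2) * θ * Complex.I) / (z - Complex.exp (θ * Complex.I))
      = 2 * z ^ (n - 2) * (z ^ 2 - 1) / (z - 2) ^ 2) :=
  ⟨bernsteinSzego_G_eq hz, bernsteinSzego_D_eq_zero (by omega) hz, bernsteinSzego_J_eq hn hz⟩
end

section
/- Let n ≥ 1 and let x₁, …, x_n be the n distinct (n+1)-st roots of unity different from 1 (equivalently, the zeros of the polynomial Σ_{j=0}^{n} z^j). Then for every j ∈ {1,…,n}: Im[ x_j·( Σ_{k≠j} 1/(x_j − x_k) + 1/(x_j − 1) ) ] = 0. (That is, particles of charge +1 at x₁,…,x_n together with a particle of charge +1 at 1 exert on each x_j a force normal to the unit circle at x_j.) -/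
/-!
With `ζ = exp (2πi/(n+1))` and `x k = ζ ^ k`, the quantity in question is
`∑_{w ≠ z} z / (z - w)`, summed over the `(n+1)`-st roots of unity `w`, where `z = x j`.
Writing `u = w / z`, this is `∑_{u ≠ 1} 1 / (1 - u)` over the same roots of unity. Since
`1 / (1 - u) + 1 / (1 - u⁻¹) = 1` and `u ↦ u⁻¹` permutes the roots of unity `≠ 1`, twice this
sum is their number `n`: the sum is `n / 2`, in particular real.
-/

open Complex Finset Polynomial

section NthRootsFinset

variable {K : Type*} [Field K] {N : ℕ}

lemma inv_mem_nthRootsFinset_one {u : K} (hu : u ∈ nthRootsFinset N (1 : K)) :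
    u⁻¹ ∈ nthRootsFinset N (1 : K) := by
  rcases N.eq_zero_or_pos with rfl | hN
  · simp at hu
  rw [Polynomial.mem_nthRootsFinset hN] at hu ⊢
  rw [inv_pow, hu, inv_one]

lemma div_mem_nthRootsFinset_one {u v : K} (hu : u ∈ nthRootsFinset N (1 : K))
    (hv : v ∈ nthRootsFinset N (1 : K)) : u / v ∈ nthRootsFinset N (1 : K) := by
  simpa [div_eq_mul_inv] using mul_mem_nthRootsFinset hu (inv_mem_nthRootsFinset_one hv)

lemma one_div_one_sub_add_one_div_one_sub_inv {w : K} (hw0 : w ≠ 0) (hw1 : w ≠ 1) :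
    1 / (1 - w) + 1 / (1 - w⁻¹) = 1 := by
  have : 1 - w ≠ 0 := sub_ne_zero.mpr hw1.symm
  have : w - 1 ≠ 0 := sub_ne_zero.mpr hw1
  field_simp
  ring

variable [DecidableEq K]

lemma two_mul_sum_nthRootsFinset_erase_one_div_one_sub :
    2 * ∑ u ∈ (nthRootsFinset N (1 : K)).erase 1, 1 / (1 - u) =
      #((nthRootsFinset N (1 : K)).erase 1) := by
  set R := nthRootsFinset N (1 : K)
  have h_inv : ∑ u ∈ R.erase 1, 1 / (1 - u⁻¹) = ∑ u ∈ R.erase 1, 1 / (1 - u) := by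
    refine sum_nbij' (·⁻¹) (·⁻¹) ?_ ?_ (fun u _ ↦ inv_inv u) (fun u _ ↦ inv_inv u) (fun _ _ ↦ rfl)
    all_goals
      intro u hu
      rw [mem_erase] at hu ⊢
      exact ⟨inv_ne_one.mpr hu.1, inv_mem_nthRootsFinset_one hu.2⟩
  calc 2 * ∑ u ∈ R.erase 1, 1 / (1 - u)
      = ∑ u ∈ R.erase 1, (1 / (1 - u) + 1 / (1 - u⁻¹)) := by
        rw [two_mul, sum_add_distrib, h_inv]
    _ = ∑ u ∈ R.erase 1, 1 := sum_congr rfl fun u hu ↦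
        one_div_one_sub_add_one_div_one_sub_inv
          (ne_zero_of_mem_nthRootsFinset one_ne_zero (mem_of_mem_erase hu)) (ne_of_mem_erase hu)
    _ = #(R.erase 1) := by rw [sum_const, nsmul_one]

lemma sum_nthRootsFinset_erase_div_sub {z : K} (hz : z ∈ nthRootsFinset N (1 : K)) :
    ∑ w ∈ (nthRootsFinset N (1 : K)).erase z, z / (z - w) =
      ∑ u ∈ (nthRootsFinset N (1 : K)).erase 1, 1 / (1 - u) := by
  have hz0 : z ≠ 0 := ne_zero_of_mem_nthRootsFinset one_ne_zero hz
  refine sum_nbij' (· / z) (z * ·) ?_ ?_ (fun w _ ↦ mul_div_cancel₀ w hz0)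
    (fun u _ ↦ mul_div_cancel_left₀ u hz0) ?_
  · intro w hw
    rw [mem_erase] at hw ⊢
    exact ⟨div_ne_one_of_ne hw.1, div_mem_nthRootsFinset_one hw.2 hz⟩
  · intro u hu
    rw [mem_erase] at hu ⊢
    refine ⟨fun h ↦ hu.1 ?_, by simpa using mul_mem_nthRootsFinset hz hu.2⟩
    rwa [mul_eq_left₀ hz0] at h
  · intro w hw
    have : z - w ≠ 0 := sub_ne_zero.mpr (ne_of_mem_erase hw).symm
    field_simp

theorem two_mul_sum_nthRootsFinset_erase_div_sub {z : K} (hz : z ∈ nthRootsFinset N (1 : K)) :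
    2 * ∑ w ∈ (nthRootsFinset N (1 : K)).erase z, z / (z - w) =
      #((nthRootsFinset N (1 : K)).erase 1) := by
  rw [sum_nthRootsFinset_erase_div_sub hz, two_mul_sum_nthRootsFinset_erase_one_div_one_sub]

end NthRootsFinset

namespace IsPrimitiveRoot

variable {K : Type*} [CommRing K] [IsDomain K] {ζ : K} {N : ℕ}

lemma pow_mem_nthRootsFinset (hζ : IsPrimitiveRoot ζ N) (hN : 0 < N) (k : ℕ) :
    ζ ^ k ∈ nthRootsFinset N (1 : K) := by
  rw [Polynomial.mem_nthRootsFinset hN, pow_right_comm, hζ.pow_eq_one, one_pow]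

lemma sum_range_erase_pow [DecidableEq K] {M : Type*} [AddCommMonoid M] {j : ℕ}
    (hζ : IsPrimitiveRoot ζ N) (hj : j < N) (f : K → M) :
    ∑ k ∈ (range N).erase j, f (ζ ^ k) = ∑ w ∈ (nthRootsFinset N (1 : K)).erase (ζ ^ j), f w := by
  have hN : 0 < N := hj.trans_le' (Nat.zero_le _)
  have : NeZero N := ⟨hN.ne'⟩
  refine sum_bij (fun k _ ↦ ζ ^ k) ?_ ?_ ?_ (fun _ _ ↦ rfl)
  · intro k hk
    rw [mem_erase, mem_range] at hk
    exact mem_erase.mpr ⟨fun h ↦ hk.1 (hζ.pow_inj hk.2 hj h), hζ.pow_mem_nthRootsFinset hN k⟩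
  · intro a ha b hb h
    exact hζ.pow_inj (mem_range.mp (mem_of_mem_erase ha)) (mem_range.mp (mem_of_mem_erase hb)) h
  · intro w hw
    rw [mem_erase, Polynomial.mem_nthRootsFinset hN] at hw
    obtain ⟨k, hk, rfl⟩ := hζ.eq_pow_of_pow_eq_one hw.2
    exact ⟨k, mem_erase.mpr ⟨fun h ↦ hw.1 (h ▸ rfl), mem_range.mpr hk⟩, rfl⟩

end IsPrimitiveRoot

theorem stmt_17_general (n : ℕ) (x : ℕ → ℂ)
    (hx : ∀ k, x k = Complex.exp (2 * Real.pi * Complex.I * k / (n + 1))) :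
    ∀ j ∈ Finset.Icc 1 n,
      (x j * ((∑ k ∈ (Finset.Icc 1 n).erase j, 1 / (x j - x k)) + 1 / (x j - 1))).im = 0 := by
  intro j hj
  obtain ⟨hj1, hjn⟩ := mem_Icc.mp hj
  set ζ := exp (2 * Real.pi * I / (n + 1 : ℕ))
  have hζ : IsPrimitiveRoot ζ (n + 1) := isPrimitiveRoot_exp (n + 1) n.succ_ne_zero
  have hxζ : ∀ k, x k = ζ ^ k := fun k ↦ by
    rw [hx, ← exp_nat_mul]
    congr 1
    push_cast
    ring
  have h_range : (range (n + 1)).erase j = insert 0 ((Icc 1 n).erase j) := by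
    ext k
    simp only [mem_erase, mem_range, mem_insert, mem_Icc]
    omega
  have h_sum : x j * ((∑ k ∈ (Icc 1 n).erase j, 1 / (x j - x k)) + 1 / (x j - 1)) =
      ∑ k ∈ (range (n + 1)).erase j, ζ ^ j / (ζ ^ j - ζ ^ k) := by
    rw [h_range, sum_insert (by simp), mul_add, mul_sum, add_comm]
    simp only [hxζ, mul_one_div, pow_zero]
  have h_two_mul :=
    two_mul_sum_nthRootsFinset_erase_div_sub (hζ.pow_mem_nthRootsFinset n.succ_pos j)
  rw [h_sum, hζ.sum_range_erase_pow (by omega) (fun w ↦ ζ ^ j / (ζ ^ j - w))]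
  simpa using congrArg im h_two_mul

/-- Particles of charge `+1` at the `(n+1)`-st roots of unity different from `1`, together
with a particle of charge `+1` at `1`, exert on each such root a force normal to the unit
circle there. -/
theorem stmt_17 (n : ℕ) (hn : 1 ≤ n) (x : ℕ → ℂ)
    (hx : ∀ k, x k = Complex.exp (2 * Real.pi * Complex.I * k / (n + 1))) :
    ∀ j ∈ Finset.Icc 1 n,
      (x j * ((∑ k ∈ (Finset.Icc 1 n).erase j, 1 / (x j - x k)) + 1 / (x j - 1))).im = 0 :=
  stmt_17_general n x hx
end
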